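/- Let k <= n. For S = {s_1 < ... < s_r} a subset of {1,...,n}, define the skip monomial x(S) = x_{s_1}^{s_1} x_{s_2}^{s_2 - 1} ... x_{s_r}^{s_r - r + 1}. The number of monomials m in x_1,...,x_n such that x_i^k does not divide m for all i and x(S) does not divide m for all subsets S of size n-k+1 equals k! * S(n,k). -/

import Mathlib

/-- Stirling numbers of the second kind. -/
def stirling : ℕ → ℕ → ℕ
  | 0, 0 => 1
  | 0, _ + 1 => 0
  | _ + 1, 0 => 0
  | n + 1, k + 1 => stirling n k + (k + 1) * stirling n (k + 1)

/-- The exponent of `x_i` in the skip monomial `x(S) = x_{s₁}^{s₁} x_{s₂}^{s₂-1} ⋯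
x_{s_r}^{s_r-r+1}`, where `S = {s₁ < ⋯ < s_r}` (positions recorded 0-indexed, values of the
letters 1-indexed). -/
def skipExp (n : ℕ) (S : Finset (Fin n)) (i : Fin n) : ℕ :=
  if i ∈ S then (i : ℕ) + 1 - (S.filter (· < i)).card else 0


/-!
A monomial `x^a` with all `a i < k` is a word `a` of length `n` over the alphabet `{0, …, k-1}`.
Read it from left to right with a counter `d`, starting at `0`, that goes up by one whenever the
current letter is `≤ d`. Peeling off the last variable shows that some `x(S)` with `#S = m`
divides `x^a` iff `m + d ≤ n` for the final value `d`; so the monomials to count are the words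
whose counter reaches `k`. Peeling off the first letter gives a recursion in the starting value
`c` of the counter, which is also satisfied by `∑_{j ≥ k - c} k(k-1)⋯(k-j+1) S(n,j)`, the number
of words with at least `k - c` distinct letters. For `c = 0` these are the `k! S(n,k)`
surjective words.
-/

open Finset

lemma Fintype.card_subtype_fin_succ {α : Type*} [Fintype α] {n : ℕ}
    (P : (Fin (n + 1) → α) → Prop) [DecidablePred P] :
    Fintype.card {b // P b} = ∑ v, Fintype.card {b : Fin n → α // P (Fin.cons v b)} := by
  rw [← Fintype.card_sigma]
  exact Fintype.card_congr <| ((Fin.consEquiv fun _ => α).subtypeEquivOfSubtype).symm.trans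
    (Equiv.subtypeProdEquivSigmaSubtype fun v b => P (Fin.cons v b))

lemma Nat.card_subtype_forall_lt_and (k n : ℕ) (P : (Fin n → ℕ) → Prop) :
    Nat.card {a : Fin n → ℕ // (∀ i, a i < k) ∧ P a} =
      Nat.card {b : Fin n → Fin k // P (fun i => b i)} :=
  Nat.card_congr
    { toFun := fun a => ⟨fun i => ⟨a.1 i, a.2.1 i⟩, a.2.2⟩
      invFun := fun b => ⟨fun i => b.1 i, fun i => (b.1 i).isLt, b.2⟩
      left_inv := fun _ => rfl
      right_inv := fun _ => rfl }

lemma sum_range_ite_le (k c x y : ℕ) :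
    ∑ v ∈ range k, (if v ≤ c then x else y) = min (c + 1) k * x + (k - min (c + 1) k) * y := by
  have hle : (range k).filter (· ≤ c) = range (min (c + 1) k) := by
    ext v; simp only [mem_filter, mem_range]; omega
  have hgt : (range k).filter (fun v => ¬ v ≤ c) = Ico (min (c + 1) k) k := by
    ext v; simp only [mem_filter, mem_range, mem_Ico]; omega
  rw [sum_ite, sum_const, sum_const, hle, hgt, card_range, Nat.card_Ico, smul_eq_mul, smul_eq_mul]

section Greedy

variable {n : ℕ}

def greedyCount (a : Fin n → ℕ) (c : ℕ) : ℕ :=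
  Fin.foldl n (fun d i => if a i ≤ d then d + 1 else d) c

lemma greedyCount_zero (a : Fin 0 → ℕ) (c : ℕ) : greedyCount a c = c := Fin.foldl_zero _ _

lemma greedyCount_succ (a : Fin (n + 1) → ℕ) (c : ℕ) :
    greedyCount a c = greedyCount (Fin.tail a) (if a 0 ≤ c then c + 1 else c) :=
  Fin.foldl_succ _ _

lemma greedyCount_succ_last (a : Fin (n + 1) → ℕ) (c : ℕ) :
    greedyCount a c = if a (Fin.last n) ≤ greedyCount (Fin.init a) c
      then greedyCount (Fin.init a) c + 1 else greedyCount (Fin.init a) c :=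
  Fin.foldl_succ_last _ _

lemma greedyCount_le (a : Fin n → ℕ) (c : ℕ) : greedyCount a c ≤ c + n := by
  induction n with
  | zero => simp [greedyCount_zero]
  | succ n ih =>
    have := ih (Fin.init a)
    rw [greedyCount_succ_last]
    split_ifs <;> omega

end Greedy

section SkipMonomials

variable {n : ℕ}

lemma skipExp_castSucc (S : Finset (Fin (n + 1))) (i : Fin n) :
    skipExp (n + 1) S i.castSucc = skipExp n {j | j.castSucc ∈ S} i := by
  have : S.filter (· < i.castSucc) =
      (({j | j.castSucc ∈ S} : Finset (Fin n)).filter (· < i)).map Fin.castSuccEmb := by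
    ext x
    induction x using Fin.lastCases <;> simp [Fin.le_last]
  simp [skipExp, this]

lemma skipExp_last (S : Finset (Fin (n + 1))) :
    skipExp (n + 1) S (Fin.last n) =
      if Fin.last n ∈ S then n + 1 - #{j : Fin n | j.castSucc ∈ S} else 0 := by
  have : S.filter (· < Fin.last n) =
      ({j | j.castSucc ∈ S} : Finset (Fin n)).map Fin.castSuccEmb := by
    ext x
    induction x using Fin.lastCases <;> simp [Fin.castSucc_lt_last]
  simp [skipExp, this]

lemma card_eq_card_castSucc_mem_add (S : Finset (Fin (n + 1))) :
    #S = #{j : Fin n | j.castSucc ∈ S} + if Fin.last n ∈ S then 1 else 0 := by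
  rw [← filter_univ_mem S, card_filter, card_filter, Fin.sum_univ_castSucc]
  simp

lemma skipExp_le_iff_castSucc (S : Finset (Fin (n + 1))) (a : Fin (n + 1) → ℕ) :
    (∀ i, skipExp (n + 1) S i ≤ a i) ↔
      (∀ i, skipExp n {j | j.castSucc ∈ S} i ≤ Fin.init a i) ∧
        (Fin.last n ∈ S → n + 1 - #{j : Fin n | j.castSucc ∈ S} ≤ a (Fin.last n)) := by
  rw [Fin.forall_fin_succ', skipExp_last]
  simp only [skipExp_castSucc, Fin.init]
  split_ifs <;> simp [*]

def HasSkipDivisor (m : ℕ) (a : Fin n → ℕ) : Prop :=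
  ∃ S : Finset (Fin n), #S = m ∧ ∀ i, skipExp n S i ≤ a i

lemma hasSkipDivisor_succ_iff (a : Fin (n + 1) → ℕ) (m : ℕ) :
    HasSkipDivisor (m + 1) a ↔ HasSkipDivisor (m + 1) (Fin.init a) ∨
      HasSkipDivisor m (Fin.init a) ∧ n + 1 - m ≤ a (Fin.last n) := by
  constructor
  · rintro ⟨S, hcard, hS⟩
    rw [skipExp_le_iff_castSucc] at hS
    rw [card_eq_card_castSucc_mem_add] at hcard
    by_cases hlast : Fin.last n ∈ S
    · rw [if_pos hlast, Nat.add_right_cancel_iff] at hcard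
      exact .inr ⟨⟨_, hcard, hS.1⟩, hcard ▸ hS.2 hlast⟩
    · rw [if_neg hlast, add_zero] at hcard
      exact .inl ⟨_, hcard, hS.1⟩
  · rintro (⟨S, hcard, hS⟩ | ⟨⟨S, hcard, hS⟩, hlast⟩)
    · refine ⟨S.map Fin.castSuccEmb, by simpa, ?_⟩
      rw [skipExp_le_iff_castSucc]
      simp [hS]
    · refine ⟨cons (Fin.last n) (S.map Fin.castSuccEmb) (by simp), by simpa, ?_⟩
      rw [skipExp_le_iff_castSucc]
      simp [hS, hcard, hlast]

theorem hasSkipDivisor_iff (a : Fin n → ℕ) (m : ℕ) :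
    HasSkipDivisor m a ↔ m + greedyCount a 0 ≤ n := by
  induction n generalizing m with
  | zero =>
    simp [HasSkipDivisor, greedyCount_zero, eq_comm, Finset.eq_empty_of_isEmpty]
  | succ n ih =>
    cases m with
    | zero => simpa [HasSkipDivisor, skipExp] using greedyCount_le a 0
    | succ m =>
      rw [hasSkipDivisor_succ_iff, ih, ih, greedyCount_succ_last]
      have := greedyCount_le (Fin.init a) 0
      split_ifs <;> omega

lemma not_hasSkipDivisor_iff {k : ℕ} (hkn : k ≤ n) (a : Fin n → ℕ) :
    ¬ HasSkipDivisor (n - k + 1) a ↔ k ≤ greedyCount a 0 := by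
  rw [hasSkipDivisor_iff]
  omega

end SkipMonomials

lemma sum_mul_descFactorial_mul_stirling_succ (k n : ℕ) (w : ℕ → ℕ) :
    ∑ j ∈ range (k + 1), w j * (k.descFactorial j * stirling (n + 1) j) =
      ∑ j ∈ range (k + 1), ((k - j) * w (j + 1) + j * w j) * (k.descFactorial j * stirling n j) := by
  simp only [add_mul, sum_add_distrib]
  rw [sum_range_succ' (fun j => w j * _), sum_range_succ (fun j => (k - j) * w (j + 1) * _),
    sum_range_succ' (fun j => j * w j * (k.descFactorial j * stirling n j))]
  simp only [show stirling (n + 1) 0 = 0 from rfl, Nat.sub_self, zero_mul, mul_zero, add_zero]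
  rw [← sum_add_distrib]
  refine sum_congr rfl fun j _ => ?_
  rw [Nat.descFactorial_succ,
    show stirling (n + 1) (j + 1) = stirling n j + (j + 1) * stirling n (j + 1) from rfl]
  ring

def stirlingTail (k n c : ℕ) : ℕ :=
  ∑ j ∈ range (k + 1), (if k ≤ c + j then 1 else 0) * (k.descFactorial j * stirling n j)

lemma stirlingTail_zero_left (k c : ℕ) : stirlingTail k 0 c = if k ≤ c then 1 else 0 := by
  rw [stirlingTail, sum_eq_single 0 (fun j _ hj => ?_) (by simp)]
  · simp [stirling]
  · obtain ⟨j, rfl⟩ := Nat.exists_eq_succ_of_ne_zero hj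
    simp [stirling]

lemma stirlingTail_succ (k n c : ℕ) :
    stirlingTail k (n + 1) c =
      min (c + 1) k * stirlingTail k n (c + 1) + (k - min (c + 1) k) * stirlingTail k n c := by
  rw [stirlingTail, sum_mul_descFactorial_mul_stirling_succ, stirlingTail, stirlingTail,
    mul_sum, mul_sum, ← sum_add_distrib]
  refine sum_congr rfl fun j hj => ?_
  have hjk : j ≤ k := Nat.lt_succ_iff.mp (mem_range.mp hj)
  have hcoef : (k - j) * (if k ≤ c + (j + 1) then 1 else 0) + j * (if k ≤ c + j then 1 else 0) =
      min (c + 1) k * (if k ≤ c + 1 + j then 1 else 0) +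
        (k - min (c + 1) k) * (if k ≤ c + j then 1 else 0) := by
    split_ifs <;> omega
  rw [hcoef]
  ring

lemma stirlingTail_zero_right (k n : ℕ) : stirlingTail k n 0 = k.factorial * stirling n k := by
  rw [stirlingTail, sum_eq_single k (fun j hj hjk => ?_) (by simp), Nat.descFactorial_self]
  · simp
  · have : j < k := by have := mem_range.mp hj; omega
    simp [this]

def greedyWordCount (k n c : ℕ) : ℕ :=
  Fintype.card {b : Fin n → Fin k // k ≤ greedyCount (fun i => (b i : ℕ)) c}

lemma greedyWordCount_zero (k c : ℕ) : greedyWordCount k 0 c = if k ≤ c then 1 else 0 := by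
  simp only [greedyWordCount, greedyCount_zero]
  split_ifs <;> simp [*]

lemma greedyWordCount_succ (k n c : ℕ) :
    greedyWordCount k (n + 1) c =
      ∑ v ∈ range k, if v ≤ c then greedyWordCount k n (c + 1) else greedyWordCount k n c := by
  rw [greedyWordCount, Fintype.card_subtype_fin_succ, ← Fin.sum_univ_eq_sum_range]
  refine sum_congr rfl fun v _ => ?_
  simp only [greedyCount_succ, Fin.cons_zero, Fin.tail_def, Fin.cons_succ]
  split_ifs <;> rfl

theorem greedyWordCount_eq_stirlingTail (k n c : ℕ) :
    greedyWordCount k n c = stirlingTail k n c := by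
  induction n generalizing c with
  | zero => rw [greedyWordCount_zero, stirlingTail_zero_left]
  | succ n ih => rw [greedyWordCount_succ, sum_range_ite_le, ih, ih, stirlingTail_succ]

theorem stmt10_general (n k : ℕ) (hkn : k ≤ n) :
    Nat.card {a : Fin n → ℕ //
      (∀ i, a i < k) ∧
      ∀ S : Finset (Fin n), S.card = n - k + 1 → ¬ (∀ i, skipExp n S i ≤ a i)}
      = k.factorial * stirling n k := by
  have hfree (a : Fin n → ℕ) :
      (∀ S : Finset (Fin n), S.card = n - k + 1 → ¬ (∀ i, skipExp n S i ≤ a i)) ↔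
        k ≤ greedyCount a 0 := by
    rw [← not_hasSkipDivisor_iff hkn]
    simp [HasSkipDivisor]
  simp only [hfree]
  rw [Nat.card_subtype_forall_lt_and, Nat.card_eq_fintype_card]
  exact (greedyWordCount_eq_stirlingTail k n 0).trans (stirlingTail_zero_right k n)

/-- The number of monomials `m` in `x₁, …, x_n` such that `x_i^k ∤ m` for all `i` and
`x(S) ∤ m` for all `S ⊆ {1, …, n}` of size `n - k + 1` equals `k! · S(n,k)`. -/
theorem stmt10 (n k : ℕ) (hk : 0 < k) (hkn : k ≤ n) :
    Nat.card {a : Fin n → ℕ //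
      (∀ i, a i < k) ∧
      ∀ S : Finset (Fin n), S.card = n - k + 1 → ¬ (∀ i, skipExp n S i ≤ a i)}
      = k.factorial * stirling n k :=
  stmt10_general n k hkn
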